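/- Let (P, ≤, *, 1) be a strongly sectionally pseudocomplemented poset and Θ a congruence on P. Then every congruence class of Θ is a convex subset of (P, ≤): if b and d lie in the same class and b ≤ c ≤ d, then c lies in that class. Moreover, every class of Θ is up-directed: any two elements of a class have a common upper bound within that class. -/

import Mathlib

/-- `star` makes the poset `P` sectionally pseudocomplemented: for all `a b`,
`star a b` is the greatest element `c` of `P` with `L(U(a,b), c) = L(b)`,
where `L(U(a,b), c)` is the set of common lower bounds of `U(a,b) ∪ {c}` and
`U(a,b)` is the set of common upper bounds of `a` and `b`. -/
def IsSPPoset {P : Type*} [PartialOrder P] (star : P → P → P) : Prop :=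
  ∀ a b : P,
    (∀ x : P, ((∀ u : P, a ≤ u → b ≤ u → x ≤ u) ∧ x ≤ star a b) ↔ x ≤ b) ∧
    ∀ c : P, (∀ x : P, ((∀ u : P, a ≤ u → b ≤ u → x ≤ u) ∧ x ≤ c) ↔ x ≤ b) →
      c ≤ star a b

/-- A strongly sectionally pseudocomplemented poset: sectionally pseudocomplemented,
with greatest element `one`, satisfying `x ≤ (x*y)*y`. -/
def IsStronglySPPoset {P : Type*} [PartialOrder P] (star : P → P → P) (one : P) : Prop :=
  IsSPPoset star ∧ (∀ x : P, x ≤ one) ∧ ∀ x y : P, x ≤ star (star x y) y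

open Classical in
/-- The minimum of two (comparable) elements of a poset. -/
noncomputable def pmin {P : Type*} [PartialOrder P] (a c : P) : P :=
  if a ≤ c then a else c

/-- A binary relation on a poset is min-stable if it is closed under taking minima of
componentwise comparable pairs. -/
def MinStable {P : Type*} [PartialOrder P] (ρ : P → P → Prop) : Prop :=
  ∀ a b c d : P, ρ a b → ρ c d → (a ≤ c ∨ c ≤ a) → (b ≤ d ∨ d ≤ b) →
    ρ (pmin a c) (pmin b d)

/-- A congruence on a sectionally pseudocomplemented poset: a min-stable equivalence
relation compatible with `star`. -/
def IsSPPCong {P : Type*} [PartialOrder P] (star : P → P → P) (Θ : P → P → Prop) : Prop :=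
  Equivalence Θ ∧ MinStable Θ ∧
    ∀ a b c d : P, Θ a b → Θ c d → Θ (star a c) (star b d)

/-- A filter of a sectionally pseudocomplemented poset with greatest element `one`. -/
def IsSPPFilter {P : Type*} [PartialOrder P] (star : P → P → P) (one : P) (F : Set P) :
    Prop :=
  one ∈ F ∧
  (∀ x y z : P, star x y ∈ F → star y x ∈ F →
    star (star x z) (star y z) ∈ F ∧ star (star z x) (star z y) ∈ F) ∧
  (∀ x y z v : P, star x y ∈ F → star y x ∈ F → star z v ∈ F → star v z ∈ F →
    (x ≤ z ∨ z ≤ x) → (y ≤ v ∨ v ≤ y) → star (pmin x z) (pmin y v) ∈ F)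

/-- `Φ(M)`: the relation of all pairs `(x, y)` with `star x y ∈ M` and `star y x ∈ M`. -/
def PhiRel {P : Type*} (star : P → P → P) (M : Set P) : P → P → Prop :=
  fun x y => star x y ∈ M ∧ star y x ∈ M

/-- The congruence class of `one` under `Θ`. -/
def oneClass {P : Type*} (Θ : P → P → Prop) (one : P) : Set P := {x : P | Θ x one}

/-!
If `x Θ y` and `y ≤ z`, then `x * z Θ y * z = 1`, hence `(x * z) * z Θ 1 * z = z`, and
`(x * z) * z` lies above both `x` (strongness) and `z`. Taking `y = z` gives a common upper bound
of `x` and `z` inside their class. If moreover `z ≤ x`, min-stability applied to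
`(x * z) * z Θ z` and `x Θ x` gives `x Θ z`, which is convexity.
-/

namespace IsSPPoset

variable {P : Type*} [PartialOrder P] {star : P → P → P}

theorem le_star (h : IsSPPoset star) (a b : P) : b ≤ star a b :=
  (((h a b).1 b).mpr le_rfl).2

theorem star_eq_of_le (h : IsSPPoset star) {one : P} (htop : ∀ x : P, x ≤ one) {a b : P}
    (hab : a ≤ b) : star a b = one :=
  le_antisymm (htop _) <| (h a b).2 one fun x =>
    ⟨fun hx => hx.1 b hab le_rfl, fun hx => ⟨fun _ _ hbu => hx.trans hbu, htop x⟩⟩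

theorem top_star (h : IsSPPoset star) {one : P} (htop : ∀ x : P, x ≤ one) (b : P) :
    star one b = b :=
  le_antisymm (((h one b).1 (star one b)).mp ⟨fun _ h1u _ => (htop _).trans h1u, le_rfl⟩)
    (h.le_star one b)

end IsSPPoset

section pmin

variable {P : Type*} [PartialOrder P] {a c : P}

theorem pmin_eq_left (h : a ≤ c) : pmin a c = a := if_pos h

theorem pmin_eq_right (h : c ≤ a) : pmin a c = c := by
  unfold pmin
  split_ifs with hac
  · exact le_antisymm hac h
  · rfl

end pmin

theorem MinStable.rel_of_le_of_le {P : Type*} [PartialOrder P] {ρ : P → P → Prop}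
    (hρ : MinStable ρ) (hrefl : ∀ x, ρ x x) {u v w : P} (huv : ρ u v) (hvw : v ≤ w)
    (hwu : w ≤ u) : ρ w v := by
  have := hρ u v w w huv (hrefl w) (Or.inr hwu) (Or.inl hvw)
  rwa [pmin_eq_right hwu, pmin_eq_left hvw] at this

theorem IsSPPCong.rel_star_star_of_le {P : Type*} [PartialOrder P] {star : P → P → P}
    {one : P} (hsp : IsSPPoset star) (htop : ∀ x : P, x ≤ one) {Θ : P → P → Prop}
    (hΘ : IsSPPCong star Θ) {x y z : P} (hxy : Θ x y) (hyz : y ≤ z) :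
    Θ (star (star x z) z) z := by
  have hxz : Θ (star x z) one := hsp.star_eq_of_le htop hyz ▸ hΘ.2.2 _ _ _ _ hxy (hΘ.1.refl z)
  simpa only [hsp.top_star htop] using hΘ.2.2 _ _ _ _ hxz (hΘ.1.refl z)

theorem stmt_17 {P : Type*} [PartialOrder P] (star : P → P → P) (one : P)
    (h : IsStronglySPPoset star one)
    (Θ : P → P → Prop) (hΘ : IsSPPCong star Θ) :
    (∀ a b c d : P, Θ a b → Θ a d → b ≤ c → c ≤ d → Θ a c) ∧
    (∀ a b c : P, Θ a b → Θ a c → ∃ e : P, Θ a e ∧ b ≤ e ∧ c ≤ e) := by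
  obtain ⟨hsp, htop, hstrong⟩ := h
  have hequiv := hΘ.1
  constructor
  · intro a b c d hab had hbc hcd
    have hdc := hΘ.rel_star_star_of_le hsp htop (hequiv.trans (hequiv.symm had) hab) hbc
    exact hequiv.trans had <|
      hΘ.2.1.rel_of_le_of_le hequiv.refl hdc hcd (hstrong d c)
  · intro a b c hab hac
    have hbc := hΘ.rel_star_star_of_le hsp htop (hequiv.trans (hequiv.symm hab) hac) le_rfl
    exact ⟨star (star b c) c, hequiv.trans hac (hequiv.symm hbc), hstrong b c,
      hsp.le_star _ _⟩
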